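/- Let a b-specification be given whose induced geometric tree is regular. Then: (a) if v and w are words with σ(v) = σ(w), j, j', j'' ∈ B, and 𝓘 is a facet index set with 𝓘 ∈ indexFacets(Q(v·j)), such that v·j' is a geometric neighbor of v·j at 𝓘 and w·j'' is a geometric neighbor of w·j at 𝓘, then j' = j''; (b) if v, v', w, w' are words and 𝓙₁, 𝓙₂ are facet index sets with σ(v) = σ(w), v' a geometric neighbor of v at 𝓙₁, w' a geometric neighbor of w at 𝓙₂, and j, j', j'' ∈ B are such that v'·j' is a geometric neighbor of v·j at 𝓘 and w'·j'' is a geometric neighbor of w·j at 𝓘, then 𝓙₁ = 𝓙₂, and if additionally σ(v') = σ(w') then j' = j''. (In other words, the lookup functions N, F^p and Ω defined from the geometry are well-defined.) -/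

import Mathlib

open Matrix BigOperators

/-- A `b`-specification in dimension `d`: states `S` with root state `sr` and
child-state map `Sc` (every state reachable from `sr`), vertex counts `n s ≥ 1`,
a root point matrix `Qr`, and transition matrices `M s j` (all column sums 1). -/
structure BSpec (d b : ℕ) (S : Type) where
  sr : S
  Sc : S → Fin b → S
  reach : ∀ s : S, ∃ w : List (Fin b), w.foldl Sc sr = s
  n : S → ℕ
  n_pos : ∀ s : S, 1 ≤ n s
  Qr : Matrix (Fin d) (Fin (n sr)) ℝ
  M : (s : S) → (j : Fin b) → Matrix (Fin (n s)) (Fin (n (Sc s j))) ℝ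
  M_trans : ∀ (s : S) (j : Fin b) (col : Fin (n (Sc s j))), ∑ i, M s j i col = 1

namespace BSpec

variable {d b : ℕ} {S : Type}

/-- The state `σ(w)` of the tree node given by the word `w` (digits read left to right,
`σ(ε) = s_r`, `σ(w·j) = S^c(σ(w), j)`). -/
def st (sp : BSpec d b S) (w : List (Fin b)) : S :=
  w.foldl sp.Sc sp.sr

/-- Helper for the point matrices: fold the transition matrices along a word. -/
def Qfrom (sp : BSpec d b S) :
    (s : S) → (w : List (Fin b)) → Matrix (Fin d) (Fin (sp.n s)) ℝ →
      Matrix (Fin d) (Fin (sp.n (w.foldl sp.Sc s))) ℝ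
  | _, [], Q => Q
  | s, j :: w, Q => sp.Qfrom (sp.Sc s j) w (Q * sp.M s j)

/-- The point matrix `Q(w)` of the tree node given by the word `w`
(`Q(ε) = Q^r`, `Q(w·j) = Q(w)·M^{σ(w),j}`). -/
def Qm (sp : BSpec d b S) (w : List (Fin b)) :
    Matrix (Fin d) (Fin (sp.n (sp.st w))) ℝ :=
  sp.Qfrom sp.sr w sp.Qr

end BSpec

/-- The `i`-th column of a matrix, as a point of `ℝ^d`. -/
def colFun {d m : ℕ} (Q : Matrix (Fin d) (Fin m) ℝ) (i : Fin m) : Fin d → ℝ :=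
  fun r => Q r i

/-- The convex hull of the columns of `Q`. -/
def convOf {d m : ℕ} (Q : Matrix (Fin d) (Fin m) ℝ) : Set (Fin d → ℝ) :=
  convexHull ℝ (Set.range (colFun Q))

/-- A face of a polytope `P`: the intersection of `P` with a supporting hyperplane. -/
def IsFace {d : ℕ} (P F : Set (Fin d → ℝ)) : Prop :=
  ∃ (c : Fin d → ℝ) (c₀ : ℝ), (∀ x ∈ P, c ⬝ᵥ x ≤ c₀) ∧ F = {x ∈ P | c ⬝ᵥ x = c₀}

open Classical in
/-- The dimension of a subset of `ℝ^d`: the dimension of its affine span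
(with the convention that the empty set has dimension `-1`). -/
noncomputable def setDim {d : ℕ} (s : Set (Fin d → ℝ)) : ℤ :=
  if s = ∅ then -1 else (Module.finrank ℝ (affineSpan ℝ s).direction : ℤ)

/-- A facet of a polytope `P`: a face of dimension `dim P - 1`. -/
def IsFacet {d : ℕ} (P F : Set (Fin d → ℝ)) : Prop :=
  IsFace P F ∧ setDim F = setDim P - 1

/-- The family of index sets (as subsets of `ℕ`) of facets of `conv(Q)`. -/
def idxFacets {d m : ℕ} (Q : Matrix (Fin d) (Fin m) ℝ) : Set (Set ℕ) :=
  {I | ∃ F : Set (Fin d → ℝ), IsFacet (convOf Q) F ∧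
    I = {i : ℕ | ∃ h : i < m, colFun Q ⟨i, h⟩ ∈ F}}

/-- The convex hull of the columns of `Q` whose index lies in `I`. -/
def facetOfIdx {d m : ℕ} (Q : Matrix (Fin d) (Fin m) ℝ) (I : Set ℕ) :
    Set (Fin d → ℝ) :=
  convexHull ℝ {x | ∃ i : Fin m, (i : ℕ) ∈ I ∧ x = colFun Q i}

/-- `τ : Q ∼ Q'`: the matrices have the same number of columns and the invertible
affine map `τ` carries the `i`-th column of `Q` to the `i`-th column of `Q'`. -/
def SimBy {d m m' : ℕ} (τ : (Fin d → ℝ) ≃ᵃ[ℝ] (Fin d → ℝ))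
    (Q : Matrix (Fin d) (Fin m) ℝ) (Q' : Matrix (Fin d) (Fin m') ℝ) : Prop :=
  m = m' ∧ ∀ (i : ℕ) (h : i < m) (h' : i < m'),
    colFun Q' ⟨i, h'⟩ = τ (colFun Q ⟨i, h⟩)

/-- `Q ∼ Q'`: some invertible affine map carries the columns of `Q` to those of `Q'`. -/
def Sim {d m m' : ℕ} (Q : Matrix (Fin d) (Fin m) ℝ)
    (Q' : Matrix (Fin d) (Fin m') ℝ) : Prop :=
  ∃ τ : (Fin d → ℝ) ≃ᵃ[ℝ] (Fin d → ℝ), SimBy τ Q Q'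

namespace BSpec

variable {d b : ℕ} {S : Type}

/-- `v'` is a geometric neighbor of `v` at the facet index set `I`:
`v` and `v'` are words of equal positive length, `I ∈ indexFacets(Q(v))`,
`conv(Q(v)) ∩ conv(Q(v'))` equals the facet of `conv(Q(v))` spanned by the
columns indexed by `I`, and this intersection is also a facet of `conv(Q(v'))`. -/
def GeomNbr (sp : BSpec d b S) (v v' : List (Fin b)) (I : Set ℕ) : Prop :=
  v.length = v'.length ∧ v ≠ [] ∧
  I ∈ idxFacets (sp.Qm v) ∧
  convOf (sp.Qm v) ∩ convOf (sp.Qm v') = facetOfIdx (sp.Qm v) I ∧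
  IsFacet (convOf (sp.Qm v')) (convOf (sp.Qm v) ∩ convOf (sp.Qm v'))

/-- Pre-regularity: (P1) equal states give affinely equivalent point matrices;
(P2) every node polytope is full-dimensional. -/
def PreRegular (sp : BSpec d b S) : Prop :=
  (∀ w w' : List (Fin b), sp.st w = sp.st w' → Sim (sp.Qm w) (sp.Qm w')) ∧
  (∀ w : List (Fin b), setDim (convOf (sp.Qm w)) = (d : ℤ))

/-- Regularity: pre-regularity together with (R1), (R2) and (R3). -/
def Regular (sp : BSpec d b S) : Prop :=
  sp.PreRegular ∧
  -- (R1)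
  (∀ (v₁ v₂ v₁' v₂' : List (Fin b)) (I : Set ℕ),
    sp.GeomNbr v₁ v₂ I → sp.GeomNbr v₁' v₂' I →
    sp.st v₁ = sp.st v₁' → sp.st v₂ = sp.st v₂' →
    ∃ τ : (Fin d → ℝ) ≃ᵃ[ℝ] (Fin d → ℝ),
      SimBy τ (sp.Qm v₁) (sp.Qm v₁') ∧ SimBy τ (sp.Qm v₂) (sp.Qm v₂')) ∧
  -- (R2)
  (∀ (w : List (Fin b)) (j : Fin b),
    convOf (sp.Qm (w ++ [j])) ⊆ convOf (sp.Qm w)) ∧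
  -- (R3)
  (∀ v v' : List (Fin b), v.length = v'.length →
    (setDim (convOf (sp.Qm v) ∩ convOf (sp.Qm v')) = (d : ℤ) → v = v') ∧
    (setDim (convOf (sp.Qm v) ∩ convOf (sp.Qm v')) = (d : ℤ) - 1 →
      ∃ I ∈ idxFacets (sp.Qm v), sp.GeomNbr v v' I))

end BSpec

/-!
Everything rests on one fact of convex geometry. Let full-dimensional polytopes `C₁` and `C₂`
each meet a polytope `P` in the same set `F`, let `F` be a facet of both, and let `F` lie in a
facet of `P`. Then `C₁` and `C₂` both lie on the far side of the hyperplane of that facet.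
Moving from a point in the relative interior of `F` into both of them shows that they overlap in
a full-dimensional set. By (R3), two nodes of equal depth that overlap like this are equal.

An affine map that carries a node onto another node with the same state also carries each child
onto the corresponding child: the columns of a child are affine combinations of the parent's
columns, with the same weights. By (P1), such a map exists for the nodes in (a). By (R1), there
is one for the node/neighbour pairs in (b). Transporting the neighbour configuration and applying
the fact above gives `j' = j''`. The index sets `J₁` and `J₂` agree because the shared child facet
has dimension `d - 1` and, by (R2), lies in a facet of the parent. Only one facet of the parent
can contain it.
-/

open Module Filter Topology

section Hyperplane

variable {d : ℕ} {s : Set (Fin d → ℝ)} {c : Fin d → ℝ} {e : ℝ}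

theorem pos_of_fun_ne_zero (hc : c ≠ 0) : 0 < d :=
  Nat.pos_of_ne_zero (by rintro rfl; exact hc (Subsingleton.elim _ _))

theorem setDim_eq_finrank_vectorSpan (hs : s.Nonempty) :
    setDim s = (finrank ℝ (vectorSpan ℝ s) : ℤ) := by
  rw [setDim, if_neg hs.ne_empty, direction_affineSpan]

theorem nonempty_of_setDim_eq_sub_one (hd : 0 < d) (hs : setDim s = d - 1) : s.Nonempty := by
  by_contra h
  rw [setDim, if_pos (Set.not_nonempty_iff_eq_empty.1 h)] at hs
  omega

theorem setDim_le (s : Set (Fin d → ℝ)) : setDim s ≤ d := by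
  rcases s.eq_empty_or_nonempty with rfl | hs
  · simp [setDim]
  · rw [setDim_eq_finrank_vectorSpan hs]
    exact_mod_cast (Submodule.finrank_le _).trans (finrank_fin_fun ℝ).le

theorem finrank_ker_dotProduct_add_one (hc : c ≠ 0) :
    finrank ℝ (LinearMap.ker (dotProductEquiv ℝ (Fin d) c)) + 1 = d := by
  simpa using Module.Dual.finrank_ker_add_one_of_ne_zero
    ((dotProductEquiv ℝ (Fin d)).map_ne_zero_iff.2 hc)

theorem vectorSpan_le_ker_dotProduct (hs : ∀ x ∈ s, c ⬝ᵥ x = e) :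
    vectorSpan ℝ s ≤ LinearMap.ker (dotProductEquiv ℝ (Fin d) c) := by
  rw [vectorSpan_def, Submodule.span_le]
  rintro _ ⟨x, hx, y, hy, rfl⟩
  simp [dotProduct_sub, hs x hx, hs y hy]

theorem setDim_lt_of_subset_hyperplane (hc : c ≠ 0) (hs : ∀ x ∈ s, c ⬝ᵥ x = e) :
    setDim s < d := by
  rcases s.eq_empty_or_nonempty with rfl | hne
  · rw [setDim, if_pos rfl]
    omega
  · have := Submodule.finrank_mono (vectorSpan_le_ker_dotProduct hs)
    have := finrank_ker_dotProduct_add_one hc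
    rw [setDim_eq_finrank_vectorSpan hne]
    omega

theorem vectorSpan_eq_ker_dotProduct (hc : c ≠ 0) (hs : ∀ x ∈ s, c ⬝ᵥ x = e)
    (hsd : setDim s = d - 1) :
    vectorSpan ℝ s = LinearMap.ker (dotProductEquiv ℝ (Fin d) c) := by
  have hne := nonempty_of_setDim_eq_sub_one (pos_of_fun_ne_zero hc) hsd
  refine Submodule.eq_of_le_of_finrank_eq (vectorSpan_le_ker_dotProduct hs) ?_
  have := finrank_ker_dotProduct_add_one hc
  rw [setDim_eq_finrank_vectorSpan hne] at hsd
  omega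

theorem exists_dotProduct_sub_eq_mul (hc : c ≠ 0) {c' : Fin d → ℝ} {e' : ℝ}
    (hs : ∀ x ∈ s, c ⬝ᵥ x = e) (hs' : ∀ x ∈ s, c' ⬝ᵥ x = e') (hsd : setDim s = d - 1) :
    ∃ r : ℝ, ∀ x, c' ⬝ᵥ x - e' = r * (c ⬝ᵥ x - e) := by
  have hker : LinearMap.ker (dotProductEquiv ℝ (Fin d) c) ≤
      LinearMap.ker (dotProductEquiv ℝ (Fin d) c') :=
    vectorSpan_eq_ker_dotProduct hc hs hsd ▸ vectorSpan_le_ker_dotProduct hs'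
  obtain ⟨r, hr⟩ := Submodule.mem_span_singleton.1 <| by
    simpa using mem_span_of_iInf_ker_le_ker
      (L := fun _ : Unit => dotProductEquiv ℝ (Fin d) c) (by simpa using hker)
  obtain ⟨x₀, hx₀⟩ := nonempty_of_setDim_eq_sub_one (pos_of_fun_ne_zero hc) hsd
  refine ⟨r, fun x => ?_⟩
  have hx := LinearMap.congr_fun hr x
  have hx₀' := LinearMap.congr_fun hr x₀
  simp only [LinearMap.smul_apply, dotProductEquiv_apply_apply, smul_eq_mul] at hx hx₀'
  rw [← hs x₀ hx₀, ← hs' x₀ hx₀, ← hx, ← hx₀']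
  ring

end Hyperplane

section Convex

variable {E : Type*} [NormedAddCommGroup E] [NormedSpace ℝ E]

theorem eventually_add_smul_mem_of_mem_intrinsicInterior {F : Set E} {x₀ h : E}
    (hx₀ : x₀ ∈ intrinsicInterior ℝ F) (hh : h ∈ vectorSpan ℝ F) :
    ∀ᶠ r in 𝓝 (0 : ℝ), x₀ + r • h ∈ F := by
  obtain ⟨y, hy, rfl⟩ := mem_intrinsicInterior.1 hx₀
  have hmem : ∀ r : ℝ, (y : E) + r • h ∈ affineSpan ℝ F := fun r => by
    rw [add_comm, ← vadd_eq_add]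
    exact AffineSubspace.vadd_mem_of_mem_direction
      (by rw [direction_affineSpan]; exact Submodule.smul_mem _ r hh) y.2
  let path : ℝ → affineSpan ℝ F := fun r => ⟨y + r • h, hmem r⟩
  have hpath : Continuous path := by fun_prop
  have h0 : path 0 = y := by ext; simp [path]
  have := hpath.continuousAt.preimage_mem_nhds (h0 ▸ isOpen_interior.mem_nhds hy)
  filter_upwards [this] with r hr
  exact (interior_subset hr : path r ∈ Subtype.val ⁻¹' F)

theorem exists_mem_inter_lt_of_hyperplane [FiniteDimensional ℝ E] {F C₁ C₂ : Set E}
    {ℓ : E →ₗ[ℝ] ℝ} {e : ℝ} (hF : Convex ℝ F) (hFne : F.Nonempty) (hFe : ∀ x ∈ F, ℓ x = e)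
    (hker : LinearMap.ker ℓ ≤ vectorSpan ℝ F) (hC₁ : Convex ℝ C₁) (hC₂ : Convex ℝ C₂)
    (hF₁ : F ⊆ C₁) (hF₂ : F ⊆ C₂) {p₁ p₂ : E} (hp₁ : p₁ ∈ C₁) (hp₂ : p₂ ∈ C₂)
    (hp₁e : ℓ p₁ < e) (hp₂e : ℓ p₂ < e) :
    ∃ z ∈ C₁ ∩ C₂, ℓ z < e := by
  obtain ⟨x₀, hx₀⟩ := Set.Nonempty.intrinsicInterior hF hFne
  have hx₀F := intrinsicInterior_subset hx₀
  set s := (e - ℓ p₂) / (e - ℓ p₁) with hs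
  have hspos : 0 < s := div_pos (by linarith) (by linarith)
  set h := (p₂ - x₀) - s • (p₁ - x₀) with hh_def
  have hh : h ∈ vectorSpan ℝ F := hker <| by
    have : e - ℓ p₁ ≠ 0 := by linarith
    simp only [LinearMap.mem_ker, h, map_sub, map_smul, hFe x₀ hx₀F, hs, smul_eq_mul]
    field_simp
    ring
  clear_value s h
  -- for small `t > 0`, `x₀ + t (p₂ - x₀)` lies on the segment from
  -- `x₀ + (t / (1 - t s)) h ∈ F` to `p₁`
  have hsmall : ∀ᶠ t in 𝓝 (0 : ℝ),
      x₀ + (t / (1 - t * s)) • h ∈ F ∧ t * s < 1 ∧ t < 1 := by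
    have hcont : ContinuousAt (fun t : ℝ => t / (1 - t * s)) 0 := by
      fun_prop (disch := norm_num)
    refine (hcont.tendsto.eventually (p := fun r => x₀ + r • h ∈ F) ?_).and
      (.and ?_ (eventually_lt_nhds zero_lt_one))
    · simpa using eventually_add_smul_mem_of_mem_intrinsicInterior hx₀ hh
    · exact (continuous_id.mul continuous_const).continuousAt.eventually_lt
        continuousAt_const (by simp)
  obtain ⟨t, ⟨hyF, hts, ht1⟩, ht0⟩ :=
    ((hsmall.filter_mono nhdsWithin_le_nhds).and self_mem_nhdsWithin).exists
      (f := 𝓝[>] (0 : ℝ))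
  have ht0 : 0 < t := ht0
  refine ⟨x₀ + t • (p₂ - x₀),
    ⟨?_, hC₂.add_smul_sub_mem (hF₂ hx₀F) hp₂ ⟨ht0.le, ht1.le⟩⟩, ?_⟩
  · convert hC₁.add_smul_sub_mem (hF₁ hyF) hp₁ (t := t * s) ⟨by positivity, hts.le⟩ using 1
    have hr : t / (1 - t * s) - t * s * (t / (1 - t * s)) = t := by
      field_simp [show 1 - t * s ≠ 0 by linarith]
    linear_combination (norm := module) -(hr • h) - t • hh_def
  · simp only [map_add, map_smul, map_sub, hFe x₀ hx₀F, smul_eq_mul]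
    nlinarith

end Convex

section Facets

variable {d : ℕ} {c : Fin d → ℝ} {e : ℝ}

theorem setDim_eq_of_superset_of_notMem_hyperplane (hc : c ≠ 0) {F s : Set (Fin d → ℝ)}
    (hFe : ∀ x ∈ F, c ⬝ᵥ x = e) (hFd : setDim F = d - 1) (hFs : F ⊆ s) {z : Fin d → ℝ}
    (hz : z ∈ s) (hze : c ⬝ᵥ z ≠ e) : setDim s = d := by
  obtain ⟨x₀, hx₀⟩ := nonempty_of_setDim_eq_sub_one (pos_of_fun_ne_zero hc) hFd
  have hlt : LinearMap.ker (dotProductEquiv ℝ (Fin d) c) < vectorSpan ℝ s := by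
    refine lt_of_le_of_ne ?_ fun h => hze ?_
    · exact vectorSpan_eq_ker_dotProduct hc hFe hFd ▸ vectorSpan_mono ℝ hFs
    · have hzx := h ▸ vsub_mem_vectorSpan ℝ hz (hFs hx₀)
      simpa [dotProduct_sub, hFe x₀ hx₀, sub_eq_zero] using hzx
  have := Submodule.finrank_lt_finrank_of_lt hlt
  have := finrank_ker_dotProduct_add_one hc
  have := setDim_le s
  rw [setDim_eq_finrank_vectorSpan ⟨z, hz⟩] at this ⊢
  omega

theorem exists_dotProduct_lt_of_setDim_eq {C : Set (Fin d → ℝ)} (hc : c ≠ 0)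
    (hC : ∀ x ∈ C, c ⬝ᵥ x ≤ e) (hCd : setDim C = d) : ∃ p ∈ C, c ⬝ᵥ p < e := by
  by_contra! h
  have := setDim_lt_of_subset_hyperplane hc fun x hx => (hC x hx).antisymm (h x hx)
  omega

theorem setDim_inter_eq_of_subset_halfspace (hc : c ≠ 0) {F C₁ C₂ : Set (Fin d → ℝ)}
    (hF : Convex ℝ F) (hFe : ∀ x ∈ F, c ⬝ᵥ x = e) (hFd : setDim F = d - 1)
    (hC₁ : Convex ℝ C₁) (hC₂ : Convex ℝ C₂) (hF₁ : F ⊆ C₁) (hF₂ : F ⊆ C₂)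
    (hC₁e : ∀ x ∈ C₁, c ⬝ᵥ x ≤ e) (hC₂e : ∀ x ∈ C₂, c ⬝ᵥ x ≤ e)
    (hC₁d : setDim C₁ = d) (hC₂d : setDim C₂ = d) : setDim (C₁ ∩ C₂) = d := by
  have hFne := nonempty_of_setDim_eq_sub_one (pos_of_fun_ne_zero hc) hFd
  obtain ⟨p₁, hp₁, hp₁e⟩ := exists_dotProduct_lt_of_setDim_eq hc hC₁e hC₁d
  obtain ⟨p₂, hp₂, hp₂e⟩ := exists_dotProduct_lt_of_setDim_eq hc hC₂e hC₂d
  obtain ⟨z, hz, hze⟩ := exists_mem_inter_lt_of_hyperplane (ℓ := dotProductEquiv ℝ (Fin d) c)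
    hF hFne hFe (vectorSpan_eq_ker_dotProduct hc hFe hFd).ge hC₁ hC₂ hF₁ hF₂ hp₁ hp₂
    hp₁e hp₂e
  exact setDim_eq_of_superset_of_notMem_hyperplane hc hFe hFd (Set.subset_inter hF₁ hF₂) hz
    hze.ne

theorem IsFacet.exists_normal (hd : 0 < d) {P F : Set (Fin d → ℝ)} (hPd : setDim P = d)
    (h : IsFacet P F) : ∃ (c : Fin d → ℝ) (e : ℝ), c ≠ 0 ∧ (∀ x ∈ P, c ⬝ᵥ x ≤ e) ∧
      F = {x ∈ P | c ⬝ᵥ x = e} ∧ setDim F = d - 1 := by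
  obtain ⟨⟨c, e, hPe, rfl⟩, hFd⟩ := h
  rw [hPd] at hFd
  refine ⟨c, e, ?_, hPe, rfl, hFd⟩
  rintro rfl
  by_cases he : 0 = e
  · simp only [zero_dotProduct, he, and_true, Set.ofPred_mem_eq] at hFd
    omega
  · simp only [zero_dotProduct, he, and_false, Set.ofPred_false] at hFd
    rw [setDim, if_pos rfl] at hFd
    omega

theorem IsFacet.eq_of_subset (hd : 0 < d) {P G₁ G₂ F : Set (Fin d → ℝ)} (hPd : setDim P = d)
    (hG₁ : IsFacet P G₁) (hG₂ : IsFacet P G₂) (hF₁ : F ⊆ G₁) (hF₂ : F ⊆ G₂)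
    (hFd : setDim F = d - 1) : G₁ = G₂ := by
  obtain ⟨c₁, e₁, hc₁, -, rfl, -⟩ := hG₁.exists_normal hd hPd
  obtain ⟨c₂, e₂, hc₂, -, rfl, -⟩ := hG₂.exists_normal hd hPd
  have hF₁e : ∀ x ∈ F, c₁ ⬝ᵥ x = e₁ := fun x hx => (hF₁ hx).2
  have hF₂e : ∀ x ∈ F, c₂ ⬝ᵥ x = e₂ := fun x hx => (hF₂ hx).2
  obtain ⟨r₁, hr₁⟩ := exists_dotProduct_sub_eq_mul hc₂ hF₂e hF₁e hFd
  obtain ⟨r₂, hr₂⟩ := exists_dotProduct_sub_eq_mul hc₁ hF₁e hF₂e hFd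
  ext x
  refine and_congr_right fun _ => ⟨fun h => ?_, fun h => ?_⟩
  · linear_combination hr₂ x + r₂ * h
  · linear_combination hr₁ x + r₁ * h

theorem subset_halfspace_of_isFacet_inter (hc : c ≠ 0) {P C : Set (Fin d → ℝ)}
    (hP : Convex ℝ P) (hC : Convex ℝ C) (hPd : setDim P = d) (hCd : setDim C = d)
    (hPe : ∀ x ∈ P, c ⬝ᵥ x ≤ e) (hFe : ∀ x ∈ P ∩ C, c ⬝ᵥ x = e) (hF : IsFacet C (P ∩ C)) :
    ∀ x ∈ C, e ≤ c ⬝ᵥ x := by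
  obtain ⟨c', e', hc', hCe', hF', hFd⟩ := hF.exists_normal (pos_of_fun_ne_zero hc) hCd
  obtain ⟨r, hr⟩ := exists_dotProduct_sub_eq_mul hc hFe (fun x hx => (hF' ▸ hx).2) hFd
  rcases lt_trichotomy r 0 with hr0 | rfl | hr0
  · intro x hx
    nlinarith [hr x, hCe' x hx]
  · refine absurd (fun x => ?_ : ∀ x, c' ⬝ᵥ x = e') fun h => hc' ?_
    · linarith [hr x]
    · exact dotProduct_self_eq_zero.1 ((h c').trans (by simpa using (h 0).symm))
  · -- `C` would lie on the same side as `P`, making `P ∩ C` full-dimensional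
    have hCe : ∀ x ∈ C, c ⬝ᵥ x ≤ e := fun x hx => by nlinarith [hr x, hCe' x hx]
    have := setDim_inter_eq_of_subset_halfspace hc (hP.inter hC) hFe hFd hP hC
      Set.inter_subset_left Set.inter_subset_right hPe hCe hPd hCd
    omega

theorem setDim_inter_eq_of_isFacet_inter (hd : 0 < d) {P G C₁ C₂ : Set (Fin d → ℝ)}
    (hP : Convex ℝ P) (hC₁ : Convex ℝ C₁) (hC₂ : Convex ℝ C₂) (hPd : setDim P = d)
    (hC₁d : setDim C₁ = d) (hC₂d : setDim C₂ = d) (hG : IsFacet P G) (hFG : P ∩ C₁ ⊆ G)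
    (hF : P ∩ C₁ = P ∩ C₂) (h₁ : IsFacet C₁ (P ∩ C₁)) (h₂ : IsFacet C₂ (P ∩ C₂)) :
    setDim (C₁ ∩ C₂) = d := by
  obtain ⟨c, e, hc, hPe, rfl, -⟩ := hG.exists_normal hd hPd
  have hFe : ∀ x ∈ P ∩ C₁, c ⬝ᵥ x = e := fun x hx => (hFG hx).2
  have hC₁e := subset_halfspace_of_isFacet_inter hc hP hC₁ hPd hC₁d hPe hFe h₁
  have hC₂e := subset_halfspace_of_isFacet_inter hc hP hC₂ hPd hC₂d hPe (hF ▸ hFe) h₂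
  refine setDim_inter_eq_of_subset_halfspace (neg_ne_zero.2 hc) (e := -e) (hP.inter hC₁)
    (fun x hx => by simp [hFe x hx]) (by rw [h₁.2, hC₁d]) hC₁ hC₂ Set.inter_subset_right
    (hF ▸ Set.inter_subset_right) (fun x hx => ?_) (fun x hx => ?_) hC₁d hC₂d
  · simpa using hC₁e x hx
  · simpa using hC₂e x hx

end Facets

section AffineEquiv

theorem AffineEquiv.image_convexHull {E F : Type*} [AddCommGroup E] [Module ℝ E]
    [AddCommGroup F] [Module ℝ F] (τ : E ≃ᵃ[ℝ] F) (s : Set E) :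
    τ '' convexHull ℝ s = convexHull ℝ (τ '' s) :=
  AffineMap.image_convexHull τ.toAffineMap s

variable {d : ℕ} (τ : (Fin d → ℝ) ≃ᵃ[ℝ] (Fin d → ℝ))

theorem AffineMap.exists_dotProduct_add_eq (g : (Fin d → ℝ) →ᵃ[ℝ] ℝ) :
    ∃ (c : Fin d → ℝ) (k : ℝ), ∀ x, g x = c ⬝ᵥ x + k :=
  ⟨(dotProductEquiv ℝ (Fin d)).symm g.linear, g 0, fun x => by
    rw [← dotProductEquiv_apply_apply, LinearEquiv.apply_symm_apply]
    exact congrFun g.decomp x⟩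

theorem IsFace.image {P F : Set (Fin d → ℝ)} (h : IsFace P F) : IsFace (τ '' P) (τ '' F) := by
  obtain ⟨c, e, hPe, rfl⟩ := h
  obtain ⟨c', k, hc'⟩ := AffineMap.exists_dotProduct_add_eq
    ((dotProductEquiv ℝ (Fin d) c : (Fin d → ℝ) →ₗ[ℝ] ℝ).toAffineMap.comp τ.symm.toAffineMap)
  have key : ∀ x, c' ⬝ᵥ τ x = c ⬝ᵥ x - k := fun x => by
    have := hc' (τ x)
    simp only [AffineMap.coe_comp, Function.comp_apply, LinearMap.coe_toAffineMap,
      AffineEquiv.coe_toAffineMap, AffineEquiv.symm_apply_apply,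
      dotProductEquiv_apply_apply] at this
    linarith
  refine ⟨c', e - k, ?_, ?_⟩
  · rintro _ ⟨x, hx, rfl⟩
    linarith [key x, hPe x hx]
  · ext y
    constructor
    · rintro ⟨x, ⟨hx, hxe⟩, rfl⟩
      exact ⟨⟨x, hx, rfl⟩, by rw [key, hxe]⟩
    · rintro ⟨⟨x, hx, rfl⟩, hxe⟩
      exact ⟨x, ⟨hx, by linarith [key x]⟩, rfl⟩

theorem setDim_image (s : Set (Fin d → ℝ)) : setDim (τ '' s) = setDim s := by
  rcases s.eq_empty_or_nonempty with rfl | hs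
  · simp
  · rw [setDim_eq_finrank_vectorSpan hs, setDim_eq_finrank_vectorSpan (hs.image _),
      ← AffineEquiv.coe_toAffineMap, ← AffineMap.map_vectorSpan]
    exact_mod_cast τ.linear.finrank_map_eq _

theorem IsFacet.image {P F : Set (Fin d → ℝ)} (h : IsFacet P F) :
    IsFacet (τ '' P) (τ '' F) :=
  ⟨h.1.image τ, by rw [setDim_image, setDim_image, h.2]⟩

end AffineEquiv

section PointMatrix

variable {d m m' k : ℕ} {τ : (Fin d → ℝ) ≃ᵃ[ℝ] (Fin d → ℝ)}

theorem simBy_iff_colFun_eq {Q Q' : Matrix (Fin d) (Fin m) ℝ} :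
    SimBy τ Q Q' ↔ colFun Q' = τ ∘ colFun Q :=
  ⟨fun h => funext fun i => h.2 i i.2 i.2, fun h => ⟨rfl, fun i hi _ => congrFun h ⟨i, hi⟩⟩⟩

theorem SimBy.of_heq {m₁ m₂ m₁' m₂' : ℕ}
    {Q₁ : Matrix (Fin d) (Fin m₁) ℝ} {Q₂ : Matrix (Fin d) (Fin m₂) ℝ}
    {Q₁' : Matrix (Fin d) (Fin m₁') ℝ} {Q₂' : Matrix (Fin d) (Fin m₂') ℝ}
    (hm : m₁ = m₂) (hm' : m₁' = m₂') (hQ : Q₁ ≍ Q₂) (hQ' : Q₁' ≍ Q₂') (h : SimBy τ Q₁ Q₁') :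
    SimBy τ Q₂ Q₂' := by
  subst hm hm'
  rwa [← eq_of_heq hQ, ← eq_of_heq hQ']

theorem facetOfIdx_eq_convexHull_image (Q : Matrix (Fin d) (Fin m) ℝ) (I : Set ℕ) :
    facetOfIdx Q I = convexHull ℝ (colFun Q '' {i | (i : ℕ) ∈ I}) := by
  rw [facetOfIdx]
  congr 1
  ext x
  exact exists_congr fun i => and_congr_right' eq_comm

theorem SimBy.convOf_eq {Q : Matrix (Fin d) (Fin m) ℝ} {Q' : Matrix (Fin d) (Fin m') ℝ}
    (h : SimBy τ Q Q') : convOf Q' = τ '' convOf Q := by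
  obtain rfl := h.1
  rw [convOf, convOf, simBy_iff_colFun_eq.1 h, Set.range_comp, τ.image_convexHull]

theorem SimBy.facetOfIdx_eq {Q : Matrix (Fin d) (Fin m) ℝ} {Q' : Matrix (Fin d) (Fin m') ℝ}
    (h : SimBy τ Q Q') (I : Set ℕ) : facetOfIdx Q' I = τ '' facetOfIdx Q I := by
  obtain rfl := h.1
  rw [facetOfIdx_eq_convexHull_image, facetOfIdx_eq_convexHull_image,
    simBy_iff_colFun_eq.1 h, Set.image_comp, τ.image_convexHull]

theorem SimBy.idxFacets_mem {Q : Matrix (Fin d) (Fin m) ℝ} {Q' : Matrix (Fin d) (Fin m') ℝ}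
    (h : SimBy τ Q Q') {I : Set ℕ} (hI : I ∈ idxFacets Q) : I ∈ idxFacets Q' := by
  obtain ⟨F, hF, rfl⟩ := hI
  have hconv := h.convOf_eq
  obtain rfl := h.1
  refine ⟨τ '' F, hconv ▸ hF.image τ, ?_⟩
  simp [simBy_iff_colFun_eq.1 h, τ.injective.mem_set_image]

theorem SimBy.mul {Q Q' : Matrix (Fin d) (Fin m) ℝ} (h : SimBy τ Q Q')
    (M : Matrix (Fin m) (Fin k) ℝ) (hM : ∀ j, ∑ i, M i j = 1) :
    SimBy τ (Q * M) (Q' * M) := by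
  have hcol : ∀ (P : Matrix (Fin d) (Fin m) ℝ) j,
      colFun (P * M) j = ∑ i, M i j • colFun P i :=
    fun P j => by ext; simp [colFun, Matrix.mul_apply, mul_comm]
  refine simBy_iff_colFun_eq.2 (funext fun j => ?_)
  rw [Function.comp_apply, hcol, hcol, simBy_iff_colFun_eq.1 h,
    ← Finset.univ.affineCombination_eq_linear_combination _ _ (hM j),
    ← Finset.univ.affineCombination_eq_linear_combination _ _ (hM j),
    ← AffineEquiv.coe_toAffineMap, Finset.map_affineCombination _ _ _ (hM j)]

theorem IsFace.convex {P F : Set (Fin d → ℝ)} (hP : Convex ℝ P) (h : IsFace P F) :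
    Convex ℝ F := by
  obtain ⟨c, e, -, rfl⟩ := h
  exact hP.inter (convex_hyperplane (dotProductEquiv ℝ (Fin d) c).isLinear e)

theorem facetOfIdx_subset {Q : Matrix (Fin d) (Fin m) ℝ} {G : Set (Fin d → ℝ)}
    (hG : Convex ℝ G) : facetOfIdx Q {i | ∃ h : i < m, colFun Q ⟨i, h⟩ ∈ G} ⊆ G :=
  convexHull_min (by rintro _ ⟨i, hi, rfl⟩; exact hi.2) hG

theorem idxFacets_eq_of_subset (hd : 0 < d) {Q : Matrix (Fin d) (Fin m) ℝ}
    (hQ : setDim (convOf Q) = d) {J₁ J₂ : Set ℕ} (hJ₁ : J₁ ∈ idxFacets Q)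
    (hJ₂ : J₂ ∈ idxFacets Q) {F : Set (Fin d → ℝ)} (hF₁ : F ⊆ facetOfIdx Q J₁)
    (hF₂ : F ⊆ facetOfIdx Q J₂) (hFd : setDim F = d - 1) : J₁ = J₂ := by
  obtain ⟨G₁, hG₁, rfl⟩ := hJ₁
  obtain ⟨G₂, hG₂, rfl⟩ := hJ₂
  rw [hG₁.eq_of_subset hd hQ hG₂
    (hF₁.trans (facetOfIdx_subset (hG₁.1.convex (convex_convexHull ℝ _))))
    (hF₂.trans (facetOfIdx_subset (hG₂.1.convex (convex_convexHull ℝ _)))) hFd]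

end PointMatrix

namespace BSpec

variable {d b : ℕ} {S : Type} (sp : BSpec d b S)

theorem st_append_singleton (v : List (Fin b)) (j : Fin b) :
    sp.st (v ++ [j]) = sp.Sc (sp.st v) j := by
  simp [st, List.foldl_append]

theorem Qfrom_append (s : S) (v u : List (Fin b)) (Q : Matrix (Fin d) (Fin (sp.n s)) ℝ) :
    sp.Qfrom s (v ++ u) Q ≍ sp.Qfrom (v.foldl sp.Sc s) u (sp.Qfrom s v Q) := by
  induction v generalizing s Q with
  | nil => rfl
  | cons a v ih => exact ih (sp.Sc s a) (Q * sp.M s a)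

theorem Qm_append_singleton (v : List (Fin b)) (j : Fin b) :
    sp.Qm (v ++ [j]) ≍ sp.Qm v * sp.M (sp.st v) j :=
  sp.Qfrom_append sp.sr v [j] sp.Qr

variable {sp}

theorem simBy_append_singleton {τ : (Fin d → ℝ) ≃ᵃ[ℝ] (Fin d → ℝ)} {v w : List (Fin b)}
    (hst : sp.st v = sp.st w) (h : SimBy τ (sp.Qm v) (sp.Qm w)) (j : Fin b) :
    SimBy τ (sp.Qm (v ++ [j])) (sp.Qm (w ++ [j])) := by
  have hmul : ∀ {s s' : S}, s = s' → ∀ {Q : Matrix (Fin d) (Fin (sp.n s)) ℝ}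
      {Q' : Matrix (Fin d) (Fin (sp.n s')) ℝ},
      SimBy τ Q Q' → SimBy τ (Q * sp.M s j) (Q' * sp.M s' j) := by
    rintro s _ rfl Q Q' h
    exact h.mul _ (sp.M_trans s j)
  exact (hmul hst h).of_heq (by rw [st_append_singleton]) (by rw [st_append_singleton])
    (sp.Qm_append_singleton v j).symm (sp.Qm_append_singleton w j).symm

theorem GeomNbr.setDim_facetOfIdx (hreg : sp.Regular) {v v' : List (Fin b)} {I : Set ℕ}
    (h : sp.GeomNbr v v' I) : setDim (facetOfIdx (sp.Qm v) I) = d - 1 := by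
  have := h.2.2.2.2.2
  rwa [h.2.2.2.1, hreg.1.2 v'] at this

theorem GeomNbr.facetOfIdx_append_subset (hreg : sp.Regular) {v v' : List (Fin b)}
    {I J : Set ℕ} {j j' : Fin b} (h : sp.GeomNbr v v' J)
    (hj : sp.GeomNbr (v ++ [j]) (v' ++ [j']) I) :
    facetOfIdx (sp.Qm (v ++ [j])) I ⊆ facetOfIdx (sp.Qm v) J := by
  rw [← h.2.2.2.1, ← hj.2.2.2.1]
  exact Set.inter_subset_inter (hreg.2.2.1 v j) (hreg.2.2.1 v' j')

theorem eq_of_geomNbr_of_simBy (hd : 0 < d) (hreg : sp.Regular)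
    {a a' x x' x'' : List (Fin b)} {τ : (Fin d → ℝ) ≃ᵃ[ℝ] (Fin d → ℝ)} {I : Set ℕ}
    (ha : SimBy τ (sp.Qm a) (sp.Qm a')) (hx : SimBy τ (sp.Qm x) (sp.Qm x'))
    (hax : sp.GeomNbr a x I) (hax'' : sp.GeomNbr a' x'' I)
    (hlen : x'.length = x''.length) : x' = x'' := by
  obtain ⟨⟨-, hdim⟩, -, -, hR3⟩ := hreg
  obtain ⟨-, -, -, hinter, hfacet⟩ := hax
  obtain ⟨-, -, ⟨G, hG, hI⟩, hinter'', hfacet''⟩ := hax''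
  have hinter' : convOf (sp.Qm a') ∩ convOf (sp.Qm x') = facetOfIdx (sp.Qm a') I := by
    rw [ha.convOf_eq, hx.convOf_eq, ← Set.image_inter τ.injective, hinter, ha.facetOfIdx_eq]
  have hfacet' : IsFacet (convOf (sp.Qm x')) (convOf (sp.Qm a') ∩ convOf (sp.Qm x')) := by
    rw [ha.convOf_eq, hx.convOf_eq, ← Set.image_inter τ.injective]
    exact hfacet.image τ
  refine (hR3 x' x'' hlen).1 (setDim_inter_eq_of_isFacet_inter (P := convOf (sp.Qm a')) hd
    (convex_convexHull ℝ _) (convex_convexHull ℝ _) (convex_convexHull ℝ _) (hdim a')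
    (hdim x') (hdim x'') hG ?_ (hinter'.trans hinter''.symm) hfacet' hfacet'')
  rw [hinter', hI]
  exact facetOfIdx_subset (hG.1.convex (convex_convexHull ℝ _))

end BSpec

theorem lookup_functions_well_defined_general {d b : ℕ} (hd : 2 ≤ d)
    {S : Type} (sp : BSpec d b S) (hreg : sp.Regular) :
    -- (a) well-definedness of N
    (∀ (v w : List (Fin b)) (j j' j'' : Fin b) (I : Set ℕ),
      sp.st v = sp.st w →
      I ∈ idxFacets (sp.Qm (v ++ [j])) →
      sp.GeomNbr (v ++ [j]) (v ++ [j']) I →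
      sp.GeomNbr (w ++ [j]) (w ++ [j'']) I →
      j' = j'') ∧
    -- (b) well-definedness of F^p and Ω
    (∀ (v v' w w' : List (Fin b)) (J₁ J₂ I : Set ℕ) (j j' j'' : Fin b),
      sp.st v = sp.st w →
      sp.GeomNbr v v' J₁ →
      sp.GeomNbr w w' J₂ →
      sp.GeomNbr (v ++ [j]) (v' ++ [j']) I →
      sp.GeomNbr (w ++ [j]) (w' ++ [j'']) I →
      J₁ = J₂ ∧ (sp.st v' = sp.st w' → j' = j'')) := by
  have hd : 0 < d := by omega
  refine ⟨fun v w j j' j'' I hst _ hv hw => ?_,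
    fun v v' w w' J₁ J₂ I j j' j'' hst hv hw hvj hwj => ?_⟩
  · obtain ⟨τ, hτ⟩ := hreg.1.1 v w hst
    simpa using BSpec.eq_of_geomNbr_of_simBy hd hreg (BSpec.simBy_append_singleton hst hτ j)
      (BSpec.simBy_append_singleton hst hτ j') hv hw (by simp)
  obtain ⟨τ, hτ⟩ := hreg.1.1 v w hst
  have hJ : J₁ = J₂ := by
    refine idxFacets_eq_of_subset hd (hreg.1.2 w) (hτ.idxFacets_mem hv.2.2.1) hw.2.2.1 ?_
      (hw.facetOfIdx_append_subset hreg hwj) (hwj.setDim_facetOfIdx hreg)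
    rw [(BSpec.simBy_append_singleton hst hτ j).facetOfIdx_eq, hτ.facetOfIdx_eq]
    exact Set.image_mono (hv.facetOfIdx_append_subset hreg hvj)
  refine ⟨hJ, fun hst' => ?_⟩
  obtain ⟨τ', hτ'v, hτ'v'⟩ := hreg.2.1 v v' w w' J₁ hv (hJ ▸ hw) hst hst'
  simpa using BSpec.eq_of_geomNbr_of_simBy hd hreg (BSpec.simBy_append_singleton hst hτ'v j)
    (BSpec.simBy_append_singleton hst' hτ'v' j') hvj hwj (by simp)

theorem lookup_functions_well_defined {d b : ℕ} (hd : 2 ≤ d) (hb : 2 ≤ b)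
    {S : Type} [Finite S] (sp : BSpec d b S) (hreg : sp.Regular) :
    -- (a) well-definedness of N
    (∀ (v w : List (Fin b)) (j j' j'' : Fin b) (I : Set ℕ),
      sp.st v = sp.st w →
      I ∈ idxFacets (sp.Qm (v ++ [j])) →
      sp.GeomNbr (v ++ [j]) (v ++ [j']) I →
      sp.GeomNbr (w ++ [j]) (w ++ [j'']) I →
      j' = j'') ∧
    -- (b) well-definedness of F^p and Ω
    (∀ (v v' w w' : List (Fin b)) (J₁ J₂ I : Set ℕ) (j j' j'' : Fin b),
      sp.st v = sp.st w →
      sp.GeomNbr v v' J₁ →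
      sp.GeomNbr w w' J₂ →
      sp.GeomNbr (v ++ [j]) (v' ++ [j']) I →
      sp.GeomNbr (w ++ [j]) (w' ++ [j'']) I →
      J₁ = J₂ ∧ (sp.st v' = sp.st w' → j' = j'')) :=
  lookup_functions_well_defined_general hd sp hreg
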